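/- The function D ↦ 𝒢(φ; D) is finite, continuous and non-increasing on [0,∞); moreover 𝒢(φ; D) > 0 for every D with 0 ≤ D < D_∞, and 𝒢(φ; D) = 0 for every D ≥ D_∞. -/

import Mathlib

open MeasureTheory ProbabilityTheory Real Filter Topology

/-!
`𝒢(φ; D)` is the supremum over `h > 0` of the slopes `h⁻¹ (Γ(h) - D)` of the chords from
`(0, D)` to the graph of `Γ`. As a supremum of affine functions of `D` it is convex and
non-increasing, and it is finite for `D ≥ 0` because Jensen's inequality gives `G(u) ≤ μ u`, hence
`Γ(h) ≤ μ ‖φ‖₂² h`. Convexity makes it continuous on `(0, ∞)`; at `D = 0`, lower semicontinuity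
(a supremum of continuous functions) together with monotonicity suffices.

Since `E e^{-uξ} ≥ P(ξ = 0)` and tends to it as `u → ∞`, we have `0 ≤ G ≤ ν` and `G(u) → ν`.
Dominated convergence then gives `Γ ≤ D_∞` and `Γ(h) → D_∞`: for `D < D_∞` some chord rises, while
for `D ≥ D_∞` no chord rises and the slopes tend to `0` as `h → ∞`.
-/

open Set Function

def chordSlopes (Γ : ℝ → ℝ) (D : ℝ) : Set ℝ := {y | ∃ h > (0 : ℝ), y = h⁻¹ * (Γ h - D)}

noncomputable def supChordSlope (Γ : ℝ → ℝ) (D : ℝ) : ℝ := sSup (chordSlopes Γ D)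

section ChordSlopes

variable {Γ : ℝ → ℝ} {M L D : ℝ}

lemma chordSlopes_nonempty (Γ : ℝ → ℝ) (D : ℝ) : (chordSlopes Γ D).Nonempty :=
  ⟨1⁻¹ * (Γ 1 - D), 1, one_pos, rfl⟩

lemma bddAbove_chordSlopes (hΓ : ∀ h > 0, Γ h ≤ M * h) (hD : 0 ≤ D) :
    BddAbove (chordSlopes Γ D) := by
  refine ⟨M, ?_⟩
  rintro _ ⟨h, hh, rfl⟩
  rw [inv_mul_le_iff₀ hh]
  linarith [hΓ h hh, mul_comm M h]

lemma le_supChordSlope (hΓ : ∀ h > 0, Γ h ≤ M * h) (hD : 0 ≤ D) {h : ℝ} (hh : 0 < h) :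
    h⁻¹ * (Γ h - D) ≤ supChordSlope Γ D :=
  le_csSup (bddAbove_chordSlopes hΓ hD) ⟨h, hh, rfl⟩

lemma supChordSlope_antitoneOn (hΓ : ∀ h > 0, Γ h ≤ M * h) :
    AntitoneOn (supChordSlope Γ) (Ici 0) := by
  intro D hD D' _ hDD'
  refine csSup_le (chordSlopes_nonempty Γ D') ?_
  rintro _ ⟨h, hh, rfl⟩
  calc h⁻¹ * (Γ h - D') ≤ h⁻¹ * (Γ h - D) := by gcongr
    _ ≤ supChordSlope Γ D := le_supChordSlope hΓ hD hh

lemma supChordSlope_convexOn (hΓ : ∀ h > 0, Γ h ≤ M * h) :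
    ConvexOn ℝ (Ici 0) (supChordSlope Γ) := by
  refine ⟨convex_Ici 0, fun D hD D' hD' a b ha hb hab => ?_⟩
  refine csSup_le (chordSlopes_nonempty Γ _) ?_
  rintro _ ⟨h, hh, rfl⟩
  calc h⁻¹ * (Γ h - (a • D + b • D'))
      = a * (h⁻¹ * (Γ h - D)) + b * (h⁻¹ * (Γ h - D')) := by
        simp only [smul_eq_mul]; linear_combination (-(h⁻¹ * Γ h)) * hab
    _ ≤ a • supChordSlope Γ D + b • supChordSlope Γ D' := by
        simp only [smul_eq_mul]
        gcongr
        exacts [le_supChordSlope hΓ hD hh, le_supChordSlope hΓ hD' hh]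

lemma continuousWithinAt_supChordSlope_zero (hΓ : ∀ h > 0, Γ h ≤ M * h) :
    ContinuousWithinAt (supChordSlope Γ) (Ici 0) 0 := by
  refine tendsto_order.2 ⟨fun y hy => ?_, fun y hy => ?_⟩
  · obtain ⟨_, ⟨h, hh, rfl⟩, hyh⟩ := exists_lt_of_lt_csSup (chordSlopes_nonempty Γ 0) hy
    have hslope : Continuous fun D => h⁻¹ * (Γ h - D) := by fun_prop
    filter_upwards [self_mem_nhdsWithin,
      nhdsWithin_le_nhds ((hslope.tendsto 0).eventually (lt_mem_nhds hyh))] with D hD hyD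
    exact hyD.trans_le (le_supChordSlope hΓ hD hh)
  · filter_upwards [self_mem_nhdsWithin] with D hD
    exact (supChordSlope_antitoneOn hΓ self_mem_Ici hD hD).trans_lt hy

lemma supChordSlope_continuousOn (hΓ : ∀ h > 0, Γ h ≤ M * h) :
    ContinuousOn (supChordSlope Γ) (Ici 0) :=
  (supChordSlope_convexOn hΓ).continuousOn_Ici (continuousWithinAt_supChordSlope_zero hΓ)

lemma supChordSlope_pos (hΓ : ∀ h > 0, Γ h ≤ M * h) (hD : 0 ≤ D)
    (hL : Tendsto Γ atTop (𝓝 L)) (hDL : D < L) : 0 < supChordSlope Γ D := by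
  obtain ⟨h, hDh, hh⟩ :=
    ((hL.eventually (eventually_gt_nhds hDL)).and (eventually_gt_atTop 0)).exists
  exact (mul_pos (inv_pos.2 hh) (sub_pos.2 hDh)).trans_le (le_supChordSlope hΓ hD hh)

lemma supChordSlope_eq_zero (hle : ∀ h > 0, Γ h ≤ L) (hL : Tendsto Γ atTop (𝓝 L))
    (hLD : L ≤ D) : supChordSlope Γ D = 0 := by
  have hslope_nonpos : ∀ y ∈ chordSlopes Γ D, y ≤ 0 := by
    rintro _ ⟨h, hh, rfl⟩
    exact mul_nonpos_of_nonneg_of_nonpos (inv_nonneg.2 hh.le) (by linarith [hle h hh])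
  refine le_antisymm (csSup_le (chordSlopes_nonempty Γ D) hslope_nonpos) ?_
  have hslope_lim : Tendsto (fun h => h⁻¹ * (Γ h - D)) atTop (𝓝 0) := by
    simpa using tendsto_inv_atTop_zero.mul (hL.sub_const D)
  refine le_of_tendsto hslope_lim ?_
  filter_upwards [eventually_gt_atTop 0] with h hh
  exact le_csSup ⟨0, hslope_nonpos⟩ ⟨h, hh, rfl⟩

end ChordSlopes

noncomputable def laplaceExponent {Ω : Type*} [MeasurableSpace Ω] (X : Ω → ℝ) (P : Measure Ω)
    (u : ℝ) : ℝ :=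
  -cgf X P (-u)

section LaplaceExponent

variable {Ω : Type*} [MeasurableSpace Ω] {P : Measure Ω} {X : Ω → ℝ} {u : ℝ}

lemma measurable_laplaceExponent (hX : ∀ t, Integrable (fun ω => exp (t * X ω)) P) :
    Measurable (laplaceExponent X P) :=
  ((measurable_log.comp (continuous_mgf hX).measurable).comp measurable_neg).neg

lemma integrable_exp_neg_mul [IsFiniteMeasure P] (hXm : AEMeasurable X P)
    (hX : ∀ᵐ ω ∂P, 0 ≤ X ω) (hu : 0 ≤ u) : Integrable (fun ω => exp (-u * X ω)) P := by
  refine .of_mem_Icc 0 1 (measurable_exp.comp_aemeasurable (hXm.const_mul (-u))) ?_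
  filter_upwards [hX] with ω hω
  exact ⟨(exp_pos _).le, exp_le_one_iff.2 (by nlinarith)⟩

lemma measureReal_eq_zero_le_mgf_neg [IsFiniteMeasure P] (hXm : Measurable X)
    (hX : ∀ᵐ ω ∂P, 0 ≤ X ω) (hu : 0 ≤ u) : P.real {ω | X ω = 0} ≤ mgf X P (-u) := by
  have hS : MeasurableSet {ω | X ω = 0} := hXm (measurableSet_singleton 0)
  rw [← integral_indicator_one hS]
  refine integral_mono ((integrable_const 1).indicator hS)
    (integrable_exp_neg_mul hXm.aemeasurable hX hu) (indicator_le' (fun ω hω => ?_)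
    (fun _ _ => (exp_pos _).le))
  simp [show X ω = 0 from hω]

lemma laplaceExponent_le_neg_log [IsFiniteMeasure P] (hXm : Measurable X)
    (hX : ∀ᵐ ω ∂P, 0 ≤ X ω) (hp : 0 < P.real {ω | X ω = 0}) (hu : 0 ≤ u) :
    laplaceExponent X P u ≤ -log (P.real {ω | X ω = 0}) :=
  neg_le_neg (log_le_log hp (measureReal_eq_zero_le_mgf_neg hXm hX hu))

lemma tendsto_mgf_neg_atTop [IsFiniteMeasure P] (hXm : Measurable X) (hX : ∀ᵐ ω ∂P, 0 ≤ X ω) :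
    Tendsto (fun u => mgf X P (-u)) atTop (𝓝 (P.real {ω | X ω = 0})) := by
  have hS : MeasurableSet {ω | X ω = 0} := hXm (measurableSet_singleton 0)
  rw [← integral_indicator_one hS]
  refine tendsto_integral_filter_of_dominated_convergence (fun _ => 1)
    (Eventually.of_forall fun u => aemeasurable_exp_mul (-u) hXm.aemeasurable) ?_
    (integrable_const 1) ?_
  · filter_upwards [eventually_ge_atTop 0] with u hu
    filter_upwards [hX] with ω hω
    rw [norm_of_nonneg (exp_pos _).le, exp_le_one_iff]
    nlinarith
  · filter_upwards [hX] with ω hω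
    rcases hω.eq_or_lt with hω0 | hωpos
    · simp [← hω0]
    · rw [indicator_of_notMem (show ω ∉ {ω | X ω = 0} from hωpos.ne')]
      exact tendsto_exp_atBot.comp (tendsto_neg_atTop_atBot.atBot_mul_const hωpos)

lemma tendsto_laplaceExponent_atTop [IsFiniteMeasure P] (hXm : Measurable X)
    (hX : ∀ᵐ ω ∂P, 0 ≤ X ω) (hp : 0 < P.real {ω | X ω = 0}) :
    Tendsto (laplaceExponent X P) atTop (𝓝 (-log (P.real {ω | X ω = 0}))) :=
  ((continuousAt_log hp.ne').tendsto.comp (tendsto_mgf_neg_atTop hXm hX)).neg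

lemma laplaceExponent_zero [IsProbabilityMeasure P] : laplaceExponent X P 0 = 0 := by
  simp [laplaceExponent]

lemma laplaceExponent_nonneg [IsProbabilityMeasure P] (hX : ∀ᵐ ω ∂P, 0 ≤ X ω) (hu : 0 ≤ u) :
    0 ≤ laplaceExponent X P u := by
  have hmgf : mgf X P (-u) ≤ 1 := by
    simpa [mgf_zero_fun] using mgf_anti_of_nonpos hX (neg_nonpos.2 hu) (by simp)
  exact neg_nonneg.2 (log_nonpos mgf_nonneg hmgf)

lemma laplaceExponent_le_integral_mul [IsProbabilityMeasure P] (hXi : Integrable X P)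
    (hexp : Integrable (fun ω => exp (-u * X ω)) P) :
    laplaceExponent X P u ≤ (∫ ω, X ω ∂P) * u := by
  have hJensen : exp (-u * ∫ ω, X ω ∂P) ≤ mgf X P (-u) := by
    have := convexOn_exp.map_integral_le continuous_exp.continuousOn isClosed_univ
      (Eventually.of_forall fun _ => mem_univ _) (hXi.const_mul (-u)) hexp
    rwa [integral_const_mul] at this
  have := log_le_log (exp_pos _) hJensen
  rw [log_exp] at this
  simp only [laplaceExponent, cgf]
  linarith

end LaplaceExponent

section IntegralCompMul

variable {α : Type*} {s : α → ℝ} {g : ℝ → ℝ} {c K h : ℝ}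

lemma norm_comp_mul_le_indicator (hs : 0 ≤ s) (hg0 : g 0 = 0)
    (hg : ∀ u, 0 ≤ u → g u ∈ Icc 0 c) (hh : 0 ≤ h) (x : α) :
    ‖g (h * s x)‖ ≤ (support s).indicator (fun _ => c) x := by
  by_cases hx : s x = 0
  · simp [hx, hg0]
  · obtain ⟨hg_nonneg, hg_le⟩ := hg _ (mul_nonneg hh (hs x))
    rwa [indicator_of_mem hx, norm_of_nonneg hg_nonneg]

variable [MeasurableSpace α] {μ : Measure α}

lemma integrable_indicator_support_const (hsm : Measurable s) (hsupp : μ (support s) < ⊤) :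
    Integrable ((support s).indicator fun _ => c) μ :=
  (integrable_indicator_iff (measurableSet_support hsm)).2 (integrableOn_const hsupp.ne)

lemma integrable_comp_mul (hgm : Measurable g) (hsm : Measurable s) (hs : 0 ≤ s)
    (hsupp : μ (support s) < ⊤) (hg0 : g 0 = 0) (hg : ∀ u, 0 ≤ u → g u ∈ Icc 0 c)
    (hh : 0 ≤ h) : Integrable (fun x => g (h * s x)) μ :=
  (integrable_indicator_support_const hsm hsupp).mono'
    (hgm.comp (hsm.const_mul h)).aestronglyMeasurable
    (Eventually.of_forall (norm_comp_mul_le_indicator hs hg0 hg hh))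

lemma integral_comp_mul_le (hgm : Measurable g) (hsm : Measurable s) (hs : 0 ≤ s)
    (hsupp : μ (support s) < ⊤) (hg0 : g 0 = 0) (hg : ∀ u, 0 ≤ u → g u ∈ Icc 0 c)
    (hh : 0 ≤ h) : ∫ x, g (h * s x) ∂μ ≤ c * μ.real (support s) :=
  calc ∫ x, g (h * s x) ∂μ ≤ ∫ x, (support s).indicator (fun _ => c) x ∂μ :=
        integral_mono (integrable_comp_mul hgm hsm hs hsupp hg0 hg hh)
          (integrable_indicator_support_const hsm hsupp)
          fun x => (le_norm_self _).trans (norm_comp_mul_le_indicator hs hg0 hg hh x)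
    _ = c * μ.real (support s) := by
        rw [integral_indicator_const _ (measurableSet_support hsm), smul_eq_mul, mul_comm]

lemma integral_comp_mul_le_mul (hgm : Measurable g) (hsm : Measurable s) (hs : 0 ≤ s)
    (hsupp : μ (support s) < ⊤) (hg0 : g 0 = 0) (hg : ∀ u, 0 ≤ u → g u ∈ Icc 0 c)
    (hgK : ∀ u, 0 ≤ u → g u ≤ K * u) (hsi : Integrable s μ) (hh : 0 ≤ h) :
    ∫ x, g (h * s x) ∂μ ≤ (K * ∫ x, s x ∂μ) * h :=
  calc ∫ x, g (h * s x) ∂μ ≤ ∫ x, K * h * s x ∂μ :=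
        integral_mono (integrable_comp_mul hgm hsm hs hsupp hg0 hg hh) (hsi.const_mul _)
          fun x => (hgK _ (mul_nonneg hh (hs x))).trans_eq (by ring)
    _ = (K * ∫ x, s x ∂μ) * h := by rw [integral_const_mul]; ring

lemma tendsto_integral_comp_mul_atTop (hgm : Measurable g) (hsm : Measurable s) (hs : 0 ≤ s)
    (hsupp : μ (support s) < ⊤) (hg0 : g 0 = 0) (hg : ∀ u, 0 ≤ u → g u ∈ Icc 0 c)
    (hgc : Tendsto g atTop (𝓝 c)) :
    Tendsto (fun h => ∫ x, g (h * s x) ∂μ) atTop (𝓝 (c * μ.real (support s))) := by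
  rw [mul_comm, ← smul_eq_mul, ← integral_indicator_const _ (measurableSet_support hsm)]
  refine tendsto_integral_filter_of_dominated_convergence ((support s).indicator fun _ => c)
    (Eventually.of_forall fun h => (hgm.comp (hsm.const_mul h)).aestronglyMeasurable) ?_
    (integrable_indicator_support_const hsm hsupp) (Eventually.of_forall fun x => ?_)
  · filter_upwards [eventually_ge_atTop 0] with h hh
    exact Eventually.of_forall (norm_comp_mul_le_indicator hs hg0 hg hh)
  · by_cases hx : s x = 0
    · simp [hx, hg0]
    · rw [indicator_of_mem hx]
      exact hgc.comp (tendsto_id.atTop_mul_const ((hs x).lt_of_ne' hx))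

end IntegralCompMul

lemma support_sum_sq {α ι : Type*} [Fintype ι] (f : α → ι → ℝ) :
    support (fun x => ∑ k, f x k ^ 2) = {x | f x ≠ 0} := by
  ext x
  have hsq : 0 ≤ fun k => f x k ^ 2 := fun k => sq_nonneg (f x k)
  simp [Fintype.sum_eq_zero_iff_of_nonneg hsq, funext_iff]

theorem calG_properties_general
    {Ω : Type*} [MeasurableSpace Ω] (P : Measure Ω) [IsProbabilityMeasure P]
    (ξ : Ω → ℝ) (hmeas : Measurable ξ)
    (hξ : ∀ᵐ ω ∂P, 0 ≤ ξ ω ∧ ξ ω ≤ 1)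
    (p : ℝ) (hp : p = (P {ω | ξ ω = 0}).toReal) (hp0 : 0 < p)
    (μ : ℝ) (hμ : μ = ∫ ω, ξ ω ∂P)
    (ν : ℝ) (hν : ν = Real.log (1 / p))
    (G : ℝ → ℝ) (hG : ∀ u, G u = -Real.log (∫ ω, Real.exp (-u * ξ ω) ∂P))
    (d : ℕ)
    (φ : (Fin d → ℝ) → (Fin d → ℝ)) (hφmeas : Measurable φ)
    (hφint : Integrable (fun x => ∑ k, (φ x k) ^ 2))
    (hsupp : volume {x | φ x ≠ 0} < ⊤)
    (Dinf : ℝ) (hDinf : Dinf = ν * (volume {x | φ x ≠ 0}).toReal)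
    (Γ : ℝ → ℝ) (hΓ : ∀ h, Γ h = ∫ x, G (h * ∑ k, (φ x k) ^ 2))
    (𝒢 : ℝ → ℝ)
    (h𝒢 : ∀ D, 𝒢 D = sSup {y : ℝ | ∃ h > (0 : ℝ), y = h⁻¹ * (Γ h - D)}) :
    (∀ D, 0 ≤ D → BddAbove {y : ℝ | ∃ h > (0 : ℝ), y = h⁻¹ * (Γ h - D)}) ∧
      ContinuousOn 𝒢 (Set.Ici 0) ∧ AntitoneOn 𝒢 (Set.Ici 0) ∧
      (∀ D, 0 ≤ D → D < Dinf → 0 < 𝒢 D) ∧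
      (∀ D, Dinf ≤ D → 𝒢 D = 0) := by
  obtain rfl : G = laplaceExponent ξ P := funext hG
  obtain rfl : 𝒢 = supChordSlope Γ := funext h𝒢
  set s := fun x => ∑ k, φ x k ^ 2
  have hs : 0 ≤ s := fun x => Finset.sum_nonneg fun k _ => sq_nonneg (φ x k)
  have hsm : Measurable s := by fun_prop
  rw [← support_sum_sq] at hsupp hDinf
  have hpP : P.real {ω | ξ ω = 0} = p := hp.symm
  have hνp : -log (P.real {ω | ξ ω = 0}) = ν := by rw [hpP, hν, one_div, log_inv]
  have hξ0 : ∀ᵐ ω ∂P, 0 ≤ ξ ω := hξ.mono fun _ => And.left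
  have hexp (t : ℝ) := integrable_exp_mul_of_mem_Icc (t := t) hmeas.aemeasurable hξ
  have hgm := measurable_laplaceExponent hexp
  have hg0 : laplaceExponent ξ P 0 = 0 := laplaceExponent_zero
  have hg (u : ℝ) (hu : 0 ≤ u) : laplaceExponent ξ P u ∈ Icc 0 ν :=
    ⟨laplaceExponent_nonneg hξ0 hu, hνp ▸ laplaceExponent_le_neg_log hmeas hξ0 (hpP ▸ hp0) hu⟩
  have hgK (u : ℝ) (_ : 0 ≤ u) : laplaceExponent ξ P u ≤ μ * u :=
    hμ ▸ laplaceExponent_le_integral_mul (.of_mem_Icc 0 1 hmeas.aemeasurable hξ) (hexp (-u))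
  have hgc : Tendsto (laplaceExponent ξ P) atTop (𝓝 ν) :=
    hνp ▸ tendsto_laplaceExponent_atTop hmeas hξ0 (hpP ▸ hp0)
  have hΓlin (h : ℝ) (hh : 0 < h) : Γ h ≤ (μ * ∫ x, s x) * h :=
    (hΓ h).trans_le (integral_comp_mul_le_mul hgm hsm hs hsupp hg0 hg hgK hφint hh.le)
  have hΓle (h : ℝ) (hh : 0 < h) : Γ h ≤ Dinf :=
    hDinf ▸ (hΓ h).trans_le (integral_comp_mul_le hgm hsm hs hsupp hg0 hg hh.le)
  have hΓlim : Tendsto Γ atTop (𝓝 Dinf) :=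
    hDinf ▸ funext hΓ ▸ tendsto_integral_comp_mul_atTop hgm hsm hs hsupp hg0 hg hgc
  exact ⟨fun D hD => bddAbove_chordSlopes hΓlin hD, supChordSlope_continuousOn hΓlin,
    supChordSlope_antitoneOn hΓlin, fun D hD hDD => supChordSlope_pos hΓlin hD hΓlim hDD,
    fun D hD => supChordSlope_eq_zero hΓle hΓlim hD⟩

/-- `D ↦ 𝒢(φ; D) = sup_{h>0} h⁻¹ (Γ(h; φ) - D)` is finite (the defining set is
bounded above), continuous and non-increasing on `[0,∞)`; it is positive for
`0 ≤ D < D_∞` and vanishes for `D ≥ D_∞`. -/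
theorem calG_properties
    {Ω : Type*} [MeasurableSpace Ω] (P : Measure Ω) [IsProbabilityMeasure P]
    (ξ : Ω → ℝ) (hmeas : Measurable ξ)
    (hξ : ∀ᵐ ω ∂P, 0 ≤ ξ ω ∧ ξ ω ≤ 1)
    (p : ℝ) (hp : p = (P {ω | ξ ω = 0}).toReal) (hp0 : 0 < p) (hp1 : p < 1)
    (μ : ℝ) (hμ : μ = ∫ ω, ξ ω ∂P) (hμpos : 0 < μ)
    (ν : ℝ) (hν : ν = Real.log (1 / p))
    (G : ℝ → ℝ) (hG : ∀ u, G u = -Real.log (∫ ω, Real.exp (-u * ξ ω) ∂P))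
    (d : ℕ) (hd : 1 ≤ d)
    (φ : (Fin d → ℝ) → (Fin d → ℝ)) (hφmeas : Measurable φ)
    (hφint : Integrable (fun x => ∑ k, (φ x k) ^ 2))
    (hφpos : 0 < ∫ x, ∑ k, (φ x k) ^ 2)
    (hsupp : volume {x | φ x ≠ 0} < ⊤)
    (Dinf : ℝ) (hDinf : Dinf = ν * (volume {x | φ x ≠ 0}).toReal)
    (Γ : ℝ → ℝ) (hΓ : ∀ h, Γ h = ∫ x, G (h * ∑ k, (φ x k) ^ 2))
    (𝒢 : ℝ → ℝ)
    (h𝒢 : ∀ D, 𝒢 D = sSup {y : ℝ | ∃ h > (0 : ℝ), y = h⁻¹ * (Γ h - D)}) :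
    (∀ D, 0 ≤ D → BddAbove {y : ℝ | ∃ h > (0 : ℝ), y = h⁻¹ * (Γ h - D)}) ∧
      ContinuousOn 𝒢 (Set.Ici 0) ∧ AntitoneOn 𝒢 (Set.Ici 0) ∧
      (∀ D, 0 ≤ D → D < Dinf → 0 < 𝒢 D) ∧
      (∀ D, Dinf ≤ D → 𝒢 D = 0) :=
  calG_properties_general P ξ hmeas hξ p hp hp0 μ hμ ν hν G hG d φ hφmeas hφint hsupp Dinf hDinf Γ
    hΓ 𝒢 h𝒢
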